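/- There exists a positive constant γ̂ independent of the mesh size h such that for every q_h ∈ 𝕎_h = L²(Ω, W_h) one has sup_{v_h ∈ 𝕍_h} E[b(v_h, q_h)] / ‖v_h‖_𝕍 ≥ γ̂ ‖q_h‖_𝕎, i.e. the Taylor–Hood finite element pair satisfies a stochastic discrete inf-sup condition uniformly in h. -/

import Mathlib

open MeasureTheory Set
open scoped InnerProductSpace

section Aux

variable {Ω : Type} [MeasurableSpace Ω] {P : Measure Ω}
variable {E : Type} [NormedAddCommGroup E] [InnerProductSpace ℝ E]

lemma integrable_inner_of_memL2 [CompleteSpace E] {f g : Ω → E}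
    (hf : MemLp f 2 P) (hg : MemLp g 2 P) :
    Integrable (fun ω => ⟪f ω, g ω⟫_ℝ) P := by
  have h := L2.integrable_inner (𝕜 := ℝ) (hf.toLp f) (hg.toLp g)
  refine h.congr ?_
  filter_upwards [hf.coeFn_toLp, hg.coeFn_toLp] with ω h1 h2
  rw [h1, h2]

lemma integrable_sq_of_memL2 [CompleteSpace E] {f : Ω → E} (hf : MemLp f 2 P) :
    Integrable (fun ω => ‖f ω‖ ^ 2) P := by
  simpa [real_inner_self_eq_norm_sq] using integrable_inner_of_memL2 hf hf

lemma integral_inner_le_L2 [CompleteSpace E] {f g : Ω → E}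
    (hf : MemLp f 2 P) (hg : MemLp g 2 P) :
    ∫ ω, ⟪f ω, g ω⟫_ℝ ∂P ≤
      Real.sqrt (∫ ω, ‖f ω‖ ^ 2 ∂P) * Real.sqrt (∫ ω, ‖g ω‖ ^ 2 ∂P) := by
  have hmul : Integrable (fun ω => ‖f ω‖ * ‖g ω‖) P := by
    simpa [real_inner_self_eq_norm_sq, mul_comm] using
      integrable_inner_of_memL2 (E := ℝ) hf.norm hg.norm
  have h1 : ∫ ω, ⟪f ω, g ω⟫_ℝ ∂P ≤ ∫ ω, ‖f ω‖ * ‖g ω‖ ∂P :=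
    integral_mono (integrable_inner_of_memL2 hf hg) hmul fun ω => real_inner_le_norm _ _
  have h2 : ∫ ω, ‖f ω‖ * ‖g ω‖ ∂P ≤
      (∫ ω, ‖f ω‖ ^ (2:ℝ) ∂P) ^ (1/(2:ℝ)) * (∫ ω, ‖g ω‖ ^ (2:ℝ) ∂P) ^ (1/(2:ℝ)) := by
    refine integral_mul_le_Lp_mul_Lq_of_nonneg ⟨by norm_num, by norm_num, by norm_num⟩
      (Filter.Eventually.of_forall fun ω => norm_nonneg _)
      (Filter.Eventually.of_forall fun ω => norm_nonneg _) ?_ ?_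
    · simpa [ENNReal.ofReal_ofNat] using hf.norm
    · simpa [ENNReal.ofReal_ofNat] using hg.norm
  have hr : ∀ x : ℝ, x ^ (2:ℝ) = x ^ 2 := fun x => by
    rw [show (2:ℝ) = ((2:ℕ):ℝ) by norm_num, Real.rpow_natCast]
  calc ∫ ω, ⟪f ω, g ω⟫_ℝ ∂P ≤ _ := h1
    _ ≤ _ := h2
    _ = _ := by
        simp_rw [hr]
        rw [Real.sqrt_eq_rpow, Real.sqrt_eq_rpow]

lemma integral_inner_comp_le {V W : Type}
    [NormedAddCommGroup V] [InnerProductSpace ℝ V] [CompleteSpace V]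
    [NormedAddCommGroup W] [InnerProductSpace ℝ W] [CompleteSpace W]
    (dvg : V →L[ℝ] W) {v : Ω → V} {q : Ω → W}
    (hv : MemLp v 2 P) (hq : MemLp q 2 P) :
    ∫ ω, ⟪dvg (v ω), q ω⟫_ℝ ∂P ≤
      ‖dvg‖ * Real.sqrt (∫ ω, ‖v ω‖ ^ 2 ∂P) * Real.sqrt (∫ ω, ‖q ω‖ ^ 2 ∂P) := by
  have hdv : MemLp (fun ω => dvg (v ω)) 2 P := by
    exact dvg.comp_memLp' hv
  have step1 := integral_inner_le_L2 hdv hq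
  have hint : ∫ ω, ‖dvg (v ω)‖ ^ 2 ∂P ≤ ∫ ω, ‖dvg‖ ^ 2 * ‖v ω‖ ^ 2 ∂P := by
    refine integral_mono (integrable_sq_of_memL2 hdv)
      ((integrable_sq_of_memL2 hv).const_mul _) fun ω => ?_
    have := dvg.le_opNorm (v ω)
    nlinarith [norm_nonneg (dvg (v ω)), norm_nonneg (v ω), norm_nonneg dvg]
  have hsq : Real.sqrt (∫ ω, ‖dvg (v ω)‖ ^ 2 ∂P) ≤
      ‖dvg‖ * Real.sqrt (∫ ω, ‖v ω‖ ^ 2 ∂P) := by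
    have hmul : ∫ ω, ‖dvg‖ ^ 2 * ‖v ω‖ ^ 2 ∂P = ‖dvg‖ ^ 2 * ∫ ω, ‖v ω‖ ^ 2 ∂P :=
      integral_const_mul _ _
    calc Real.sqrt (∫ ω, ‖dvg (v ω)‖ ^ 2 ∂P)
        ≤ Real.sqrt (‖dvg‖ ^ 2 * ∫ ω, ‖v ω‖ ^ 2 ∂P) := by
          refine Real.sqrt_le_sqrt ?_; rw [← hmul]; exact hint
      _ = ‖dvg‖ * Real.sqrt (∫ ω, ‖v ω‖ ^ 2 ∂P) := by
          rw [Real.sqrt_mul (sq_nonneg _), Real.sqrt_sq (norm_nonneg _)]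
  calc ∫ ω, ⟪dvg (v ω), q ω⟫_ℝ ∂P
      ≤ Real.sqrt (∫ ω, ‖dvg (v ω)‖ ^ 2 ∂P) * Real.sqrt (∫ ω, ‖q ω‖ ^ 2 ∂P) := step1
    _ ≤ ‖dvg‖ * Real.sqrt (∫ ω, ‖v ω‖ ^ 2 ∂P) * Real.sqrt (∫ ω, ‖q ω‖ ^ 2 ∂P) :=
        mul_le_mul_of_nonneg_right hsq (Real.sqrt_nonneg _)

end Aux

/-- **Lemma 4.1 (stochastic discrete inf-sup condition).**  There is a constant `γ̂ > 0`,
independent of the mesh size `h` (i.e. of the Taylor–Hood pair `(V_h, W_h)`), such that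
for every `q_h ∈ 𝕎_h = L²(Ω, W_h)`,
`sup_{v_h ∈ 𝕍_h} E[b(v_h, q_h)] / ‖v_h‖_𝕍 ≥ γ̂ ‖q_h‖_𝕎`.
`V` stands for `[H₀¹(D)]ᵈ` (with the `H¹` norm) and `W` for `L₀²(D)`. -/
theorem stochastic_discrete_inf_sup
    {Ω : Type} [mΩ : MeasurableSpace Ω] (P : Measure Ω) [IsProbabilityMeasure P]
    {V W : Type}
    [NormedAddCommGroup V] [InnerProductSpace ℝ V] [CompleteSpace V]
    [NormedAddCommGroup W] [InnerProductSpace ℝ W] [CompleteSpace W]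
    -- the divergence operator; b(v,q) = ⟪dvg v, q⟫
    (dvg : V →L[ℝ] W)
    -- consequence of the elliptic regularity of the bounded polygonal/polyhedral domain D
    (c₁ : ℝ) (hc₁ : 0 < c₁)
    (hdiv_surj : ∀ q : W, ∃ v : V, dvg v = q ∧ ‖v‖ ≤ c₁ * ‖q‖)
    -- the h-uniform deterministic discrete inf-sup constant γ of the Taylor–Hood pair
    (γ : ℝ) (hγ : 0 < γ) :
    ∃ γhat : ℝ, 0 < γhat ∧
      ∀ (Vh : Submodule ℝ V) (Wh : Submodule ℝ W),
        -- the deterministic discrete inf-sup (LBB) condition for the pair (Vh, Wh)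
        (∀ qh ∈ Wh, γ * ‖qh‖ ≤ ⨆ vh : Vh, ⟪dvg (vh : V), qh⟫_ℝ / ‖(vh : V)‖) →
        ∀ qh : Ω → W, MemLp qh 2 P → (∀ ω, qh ω ∈ Wh) →
          γhat * Real.sqrt (∫ ω, ‖qh ω‖ ^ 2 ∂P)
            ≤ ⨆ vh : {v : Ω → V // MemLp v 2 P ∧ ∀ ω, v ω ∈ Vh},
                (∫ ω, ⟪dvg (vh.1 ω), qh ω⟫_ℝ ∂P) /
                  Real.sqrt (∫ ω, ‖vh.1 ω‖ ^ 2 ∂P) := by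
  refine ⟨γ / 2, by positivity, ?_⟩
  intro Vh Wh hinf qh hqh hqhWh
  set b := Real.sqrt (∫ ω, ‖qh ω‖ ^ 2 ∂P) with hb
  have hbnn : 0 ≤ b := Real.sqrt_nonneg _
  -- the (nonlinear, noncomputable) selection map realizing the deterministic inf-sup
  have hsel : ∀ x : W, x ∈ Wh →
      ∃ w : V, w ∈ Vh ∧ ‖w‖ = ‖x‖ ∧ γ / 2 * ‖x‖ ^ 2 ≤ ⟪dvg w, x⟫_ℝ := by
    intro x hx
    by_cases hx0 : x = 0
    · exact ⟨0, Vh.zero_mem, by simp [hx0], by simp [hx0]⟩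
    have hxpos : 0 < ‖x‖ := norm_pos_iff.mpr hx0
    have hlt : γ / 2 * ‖x‖ < ⨆ v : Vh, ⟪dvg (v : V), x⟫_ℝ / ‖(v : V)‖ :=
      lt_of_lt_of_le (by nlinarith) (hinf x hx)
    obtain ⟨v, hv⟩ := exists_lt_of_lt_ciSup hlt
    have hpos : 0 < γ / 2 * ‖x‖ := by positivity
    have hvn : (0:ℝ) < ‖(v : V)‖ := by
      rcases eq_or_lt_of_le (norm_nonneg (v : V)) with h | h
      · rw [← h, div_zero] at hv; linarith
      · exact h
    have h2 : γ / 2 * ‖x‖ * ‖(v : V)‖ < ⟪dvg (v : V), x⟫_ℝ := (lt_div_iff₀ hvn).mp hv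
    refine ⟨(‖x‖ / ‖(v : V)‖) • (v : V), Vh.smul_mem _ v.2, ?_, ?_⟩
    · rw [norm_smul, Real.norm_of_nonneg (by positivity), div_mul_cancel₀ _ hvn.ne']
    · have heq : ⟪dvg ((‖x‖ / ‖(v : V)‖) • (v : V)), x⟫_ℝ
          = (‖x‖ / ‖(v : V)‖) * ⟪dvg (v : V), x⟫_ℝ := by
        rw [ContinuousLinearMap.map_smul]; exact real_inner_smul_left _ _ _
      rw [heq]
      have hc : 0 ≤ ‖x‖ / ‖(v : V)‖ := by positivity
      calc γ / 2 * ‖x‖ ^ 2 = (‖x‖ / ‖(v : V)‖) * (γ / 2 * ‖x‖ * ‖(v : V)‖) := by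
            field_simp
        _ ≤ (‖x‖ / ‖(v : V)‖) * ⟪dvg (v : V), x⟫_ℝ :=
            mul_le_mul_of_nonneg_left h2.le hc
  choose! u hu1 hu2 hu3 using hsel
  -- the supremum is over a nonempty, bounded above family
  set F : {v : Ω → V // MemLp v 2 P ∧ ∀ ω, v ω ∈ Vh} → ℝ := fun vh =>
    (∫ ω, ⟪dvg (vh.1 ω), qh ω⟫_ℝ ∂P) / Real.sqrt (∫ ω, ‖vh.1 ω‖ ^ 2 ∂P) with hF
  have hne : Nonempty {v : Ω → V // MemLp v 2 P ∧ ∀ ω, v ω ∈ Vh} :=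
    ⟨⟨fun _ => 0, MemLp.zero', fun _ => Vh.zero_mem⟩⟩
  have hBdd : BddAbove (Set.range F) := by
    refine ⟨‖dvg‖ * b, ?_⟩
    rintro _ ⟨vh, rfl⟩
    simp only [hF]
    by_cases h : Real.sqrt (∫ ω, ‖vh.1 ω‖ ^ 2 ∂P) = 0
    · rw [h, div_zero]; positivity
    · have hpos : 0 < Real.sqrt (∫ ω, ‖vh.1 ω‖ ^ 2 ∂P) :=
        lt_of_le_of_ne (Real.sqrt_nonneg _) (Ne.symm h)
      rw [div_le_iff₀ hpos]
      calc ∫ ω, ⟪dvg (vh.1 ω), qh ω⟫_ℝ ∂P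
          ≤ ‖dvg‖ * Real.sqrt (∫ ω, ‖vh.1 ω‖ ^ 2 ∂P) * b :=
            integral_inner_comp_le dvg vh.2.1 hqh
        _ = ‖dvg‖ * b * Real.sqrt (∫ ω, ‖vh.1 ω‖ ^ 2 ∂P) := by ring
  have hS0 : 0 ≤ ⨆ vh, F vh := by
    have hle := le_ciSup hBdd (⟨fun _ => 0, MemLp.zero', fun _ => Vh.zero_mem⟩ :
      {v : Ω → V // MemLp v 2 P ∧ ∀ ω, v ω ∈ Vh})
    refine le_trans (le_of_eq ?_) hle
    simp [hF]
  -- main estimate via simple-function approximation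
  refine le_of_forall_pos_le_add fun ε hε => ?_
  set C : ℝ := γ / 2 + ‖dvg‖ + 1 with hC
  have hCpos : 0 < C := by positivity
  set δ : ℝ := ε / C with hδ
  have hδpos : 0 < δ := by positivity
  -- view qh as an L² function into the subspace Wh and approximate by a simple function
  set q' : Ω → Wh := fun ω => ⟨qh ω, hqhWh ω⟩ with hq'def
  have hq' : MemLp q' 2 P := by
    constructor
    · have hemb : Topology.IsEmbedding ((↑) : Wh → W) :=
        isometry_subtype_coe.isEmbedding
      rw [← hemb.aestronglyMeasurable_comp_iff]
      exact hqh.1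
    · have hnormeq : eLpNorm q' 2 P = eLpNorm qh 2 P := by
        rw [← eLpNorm_norm q', ← eLpNorm_norm qh]; rfl
      rw [hnormeq]; exact hqh.2
  obtain ⟨g, hg, hgmem⟩ := hq'.exists_simpleFunc_eLpNorm_sub_lt (by norm_num)
    (ε := ENNReal.ofReal δ) (ENNReal.ofReal_pos.mpr hδpos).ne'
  -- the W-valued simple approximation
  set s : Ω → W := fun ω => (g ω : W) with hsdef
  have hsWh : ∀ ω, s ω ∈ Wh := fun ω => (g ω).2
  have hsmem : MemLp s 2 P := by
    have := (g.map (Subtype.val)).memLp_of_isFiniteMeasure 2 P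
    exact this
  have hqs : MemLp (fun ω => qh ω - s ω) 2 P := hqh.sub hsmem
  -- the L² error is at most δ
  set e := Real.sqrt (∫ ω, ‖qh ω - s ω‖ ^ 2 ∂P) with he
  have henn : 0 ≤ e := Real.sqrt_nonneg _
  have heδ : e ≤ δ := by
    have h1 : eLpNorm (fun ω => qh ω - s ω) 2 P = eLpNorm (q' - ⇑g) 2 P := by
      rw [← eLpNorm_norm (fun ω => qh ω - s ω), ← eLpNorm_norm (q' - ⇑g)]
      congr 1
    have h2 : eLpNorm (fun ω => qh ω - s ω) 2 P < ENNReal.ofReal δ := by rw [h1]; exact hg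
    rw [hqs.eLpNorm_eq_integral_rpow_norm (by norm_num) (by norm_num)] at h2
    rw [ENNReal.toReal_ofNat] at h2
    have h3 := (ENNReal.ofReal_lt_ofReal_iff hδpos).mp h2
    have hr : ∀ x : ℝ, x ^ (2:ℝ) = x ^ 2 := fun x => by
      rw [show (2:ℝ) = ((2:ℕ):ℝ) by norm_num, Real.rpow_natCast]
    simp_rw [hr] at h3
    rw [he, Real.sqrt_eq_rpow, one_div]
    exact h3.le
  -- the candidate random test function
  set vh : Ω → V := fun ω => u (s ω) with hvhdef
  have hvhmem : MemLp vh 2 P := by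
    have := ((g.map (Subtype.val)).map u).memLp_of_isFiniteMeasure 2 P
    exact this
  have hvhVh : ∀ ω, vh ω ∈ Vh := fun ω => hu1 _ (hsWh ω)
  have hnrm : ∀ ω, ‖vh ω‖ = ‖s ω‖ := fun ω => hu2 _ (hsWh ω)
  have hdvh : MemLp (fun ω => dvg (vh ω)) 2 P := by
    exact dvg.comp_memLp' hvhmem
  set a := Real.sqrt (∫ ω, ‖s ω‖ ^ 2 ∂P) with ha
  have hann : 0 ≤ a := Real.sqrt_nonneg _
  have hsint : ∫ ω, ‖s ω‖ ^ 2 ∂P = a ^ 2 :=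
    (Real.sq_sqrt (integral_nonneg fun ω => by positivity)).symm
  have hIntEq : (∫ ω, ‖vh ω‖ ^ 2 ∂P) = ∫ ω, ‖s ω‖ ^ 2 ∂P := by
    refine integral_congr_ae (Filter.Eventually.of_forall fun ω => ?_)
    show ‖vh ω‖ ^ 2 = ‖s ω‖ ^ 2
    rw [hnrm ω]
  -- lower bound for the inner integral against s
  have h_low : γ / 2 * a ^ 2 ≤ ∫ ω, ⟪dvg (vh ω), s ω⟫_ℝ ∂P := by
    have hmono : ∫ ω, γ / 2 * ‖s ω‖ ^ 2 ∂P ≤ ∫ ω, ⟪dvg (vh ω), s ω⟫_ℝ ∂P :=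
      integral_mono ((integrable_sq_of_memL2 hsmem).const_mul _)
        (integrable_inner_of_memL2 hdvh hsmem) fun ω => hu3 _ (hsWh ω)
    have hml : ∫ ω, γ / 2 * ‖s ω‖ ^ 2 ∂P = γ / 2 * ∫ ω, ‖s ω‖ ^ 2 ∂P :=
      integral_const_mul _ _
    calc γ / 2 * a ^ 2 = ∫ ω, γ / 2 * ‖s ω‖ ^ 2 ∂P := by rw [hml, hsint]
      _ ≤ _ := hmono
  -- splitting and error bound
  have hI1 : Integrable (fun ω => ⟪dvg (vh ω), qh ω⟫_ℝ) P :=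
    integrable_inner_of_memL2 hdvh hqh
  have hsq2 : MemLp (fun ω => s ω - qh ω) 2 P := hsmem.sub hqh
  have hI2 : Integrable (fun ω => ⟪dvg (vh ω), s ω - qh ω⟫_ℝ) P :=
    integrable_inner_of_memL2 hdvh hsq2
  have h_split : ∫ ω, ⟪dvg (vh ω), s ω⟫_ℝ ∂P
      = (∫ ω, ⟪dvg (vh ω), qh ω⟫_ℝ ∂P) + ∫ ω, ⟪dvg (vh ω), s ω - qh ω⟫_ℝ ∂P := by
    rw [← integral_add hI1 hI2]
    refine integral_congr_ae (Filter.Eventually.of_forall fun ω => ?_)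
    show ⟪dvg (vh ω), s ω⟫_ℝ = ⟪dvg (vh ω), qh ω⟫_ℝ + ⟪dvg (vh ω), s ω - qh ω⟫_ℝ
    rw [inner_sub_right]; ring
  have h_err : ∫ ω, ⟪dvg (vh ω), s ω - qh ω⟫_ℝ ∂P ≤ ‖dvg‖ * a * e := by
    have h := integral_inner_comp_le dvg hvhmem hsq2
    have he2 : (∫ ω, ‖s ω - qh ω‖ ^ 2 ∂P) = ∫ ω, ‖qh ω - s ω‖ ^ 2 ∂P := by
      refine integral_congr_ae (Filter.Eventually.of_forall fun ω => ?_)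
      show ‖s ω - qh ω‖ ^ 2 = ‖qh ω - s ω‖ ^ 2
      rw [norm_sub_rev]
    rw [hIntEq, he2] at h
    calc ∫ ω, ⟪dvg (vh ω), s ω - qh ω⟫_ℝ ∂P
        ≤ ‖dvg‖ * Real.sqrt (∫ ω, ‖s ω‖ ^ 2 ∂P) * Real.sqrt (∫ ω, ‖qh ω - s ω‖ ^ 2 ∂P) := h
      _ = ‖dvg‖ * a * e := by rw [← ha, ← he]
  have hN : γ / 2 * a ^ 2 - ‖dvg‖ * a * e ≤ ∫ ω, ⟪dvg (vh ω), qh ω⟫_ℝ ∂P := by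
    have h := h_split ▸ h_low
    linarith
  -- b ≤ a + e
  have hbae : b ≤ a + e := by
    have hb2 : ∫ ω, ‖qh ω‖ ^ 2 ∂P = b ^ 2 :=
      (Real.sq_sqrt (integral_nonneg fun ω => by positivity)).symm
    have hJ1 : Integrable (fun ω => ⟪qh ω, s ω⟫_ℝ) P := integrable_inner_of_memL2 hqh hsmem
    have hJ2 : Integrable (fun ω => ⟪qh ω, qh ω - s ω⟫_ℝ) P := integrable_inner_of_memL2 hqh hqs
    have hsplit2 : ∫ ω, ‖qh ω‖ ^ 2 ∂P
        = (∫ ω, ⟪qh ω, s ω⟫_ℝ ∂P) + ∫ ω, ⟪qh ω, qh ω - s ω⟫_ℝ ∂P := by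
      rw [← integral_add hJ1 hJ2]
      refine integral_congr_ae (Filter.Eventually.of_forall fun ω => ?_)
      show ‖qh ω‖ ^ 2 = ⟪qh ω, s ω⟫_ℝ + ⟪qh ω, qh ω - s ω⟫_ℝ
      rw [inner_sub_right, real_inner_self_eq_norm_sq]; ring
    have h1 : ∫ ω, ⟪qh ω, s ω⟫_ℝ ∂P ≤ b * a := by
      have h := integral_inner_le_L2 hqh hsmem
      calc ∫ ω, ⟪qh ω, s ω⟫_ℝ ∂P
          ≤ Real.sqrt (∫ ω, ‖qh ω‖ ^ 2 ∂P) * Real.sqrt (∫ ω, ‖s ω‖ ^ 2 ∂P) := h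
        _ = b * a := by rw [← hb, ← ha]
    have h2 : ∫ ω, ⟪qh ω, qh ω - s ω⟫_ℝ ∂P ≤ b * e := by
      have h := integral_inner_le_L2 hqh hqs
      calc ∫ ω, ⟪qh ω, qh ω - s ω⟫_ℝ ∂P
          ≤ Real.sqrt (∫ ω, ‖qh ω‖ ^ 2 ∂P) * Real.sqrt (∫ ω, ‖qh ω - s ω‖ ^ 2 ∂P) := h
        _ = b * e := by rw [← hb, ← he]
    have hb2' : b ^ 2 ≤ b * a + b * e := by rw [← hb2, hsplit2]; linarith
    rcases eq_or_lt_of_le hbnn with hb0 | hb0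
    · rw [← hb0]; linarith
    · have hbb : b * b ≤ b * (a + e) := by rw [mul_add]; nlinarith
      exact le_of_mul_le_mul_left hbb hb0
  -- conclude
  have hsup : (∫ ω, ⟪dvg (vh ω), qh ω⟫_ℝ ∂P) / a ≤ ⨆ w, F w := by
    have hle := le_ciSup hBdd
      (⟨vh, hvhmem, hvhVh⟩ : {v : Ω → V // MemLp v 2 P ∧ ∀ ω, v ω ∈ Vh})
    refine le_trans (le_of_eq ?_) hle
    have hFv : F ⟨vh, hvhmem, hvhVh⟩
        = (∫ ω, ⟪dvg (vh ω), qh ω⟫_ℝ ∂P) / Real.sqrt (∫ ω, ‖vh ω‖ ^ 2 ∂P) := rfl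
    rw [hFv, hIntEq, ← ha]
  clear_value a b e C δ vh s q' F
  have hCδ : C * δ = ε := by rw [hδ]; field_simp
  have hγ2nn : (0:ℝ) ≤ γ / 2 := by positivity
  by_cases haz : a = 0
  · -- then b ≤ e ≤ δ and the claim is trivial
    have hbδ : b ≤ δ := by rw [haz] at hbae; linarith
    have hγC : γ / 2 ≤ C := by rw [hC]; linarith [norm_nonneg dvg]
    have hfin : γ / 2 * b ≤ C * δ :=
      calc γ / 2 * b ≤ γ / 2 * δ := mul_le_mul_of_nonneg_left hbδ hγ2nn
        _ ≤ C * δ := mul_le_mul_of_nonneg_right hγC hδpos.le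
    rw [hCδ] at hfin
    linarith
  · have hapos : 0 < a := lt_of_le_of_ne hann (Ne.symm haz)
    have hterm : γ / 2 * a - ‖dvg‖ * e ≤ (∫ ω, ⟪dvg (vh ω), qh ω⟫_ℝ ∂P) / a := by
      rw [le_div_iff₀ hapos]
      calc (γ / 2 * a - ‖dvg‖ * e) * a = γ / 2 * a ^ 2 - ‖dvg‖ * a * e := by ring
        _ ≤ _ := hN
    have h2 : (γ / 2 + ‖dvg‖) * e ≤ C * δ :=
      calc (γ / 2 + ‖dvg‖) * e ≤ (γ / 2 + ‖dvg‖) * δ :=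
            mul_le_mul_of_nonneg_left heδ (by positivity)
        _ ≤ C * δ := mul_le_mul_of_nonneg_right (by rw [hC]; linarith) hδpos.le
    have h3 : γ / 2 * b ≤ γ / 2 * (a + e) := mul_le_mul_of_nonneg_left hbae hγ2nn
    rw [hCδ] at h2
    rw [mul_add] at h3
    rw [add_mul] at h2
    linarith only [hterm, hsup, h2, h3]
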